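/- In the N-player Prisoner's Dilemma with Pareto-optimal mutual cooperation, if u lies in the convex hull E of payoff vectors and -δ ≤ μ¹(u) ≤ 0, then u₁ ≤ v(C,N-1). -/

import Mathlib

/-!
Pareto optimality bounds the total payoff `∑ i, U s i` by `N · v(C,N-1)` at every pure profile,
and this linear bound passes to the convex hull `E`. On the other hand `μ¹(u) ≤ 0` says that
player 1 earns at most the average of the other players, hence at most the average `(∑ i, u i) / N`
of all players, which is at most `v(C,N-1)`.
-/

open Finset

theorem sum_le_of_mem_convexHull {ι : Type*} [Fintype ι] {S : Set (ι → ℝ)} {c : ℝ}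
    (hS : ∀ x ∈ S, ∑ i, x i ≤ c) {u : ι → ℝ} (hu : u ∈ convexHull ℝ S) : ∑ i, u i ≤ c :=
  have hconvex : Convex ℝ {x : ι → ℝ | ∑ i, x i ≤ c} := by
    simpa using convex_halfSpace_le (∑ i, LinearMap.proj i : (ι → ℝ) →ₗ[ℝ] ℝ).isLinear c
  convexHull_min hS hconvex hu

theorem card_mul_le_sum_of_le_mean_others {ι : Type*} [Fintype ι] [DecidableEq ι]
    (u : ι → ℝ) (i₀ : ι) (hcard : 1 < Fintype.card ι)
    (h : u i₀ - (1 / ((Fintype.card ι : ℝ) - 1)) * ∑ j ∈ univ.filter (· ≠ i₀), u j ≤ 0) :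
    Fintype.card ι * u i₀ ≤ ∑ i, u i := by
  have hpos : (0 : ℝ) < (Fintype.card ι : ℝ) - 1 := by
    rw [sub_pos]; exact_mod_cast hcard
  rw [filter_ne', sum_erase_eq_sub (mem_univ i₀), sub_nonpos, one_div_mul_eq_div,
    le_div_iff₀ hpos] at h
  linarith

theorem payoff_upper_bound (N : ℕ) (hN : 2 ≤ N) (vC : ℕ → ℝ)
    (U : (Fin N → Bool) → Fin N → ℝ)
    (hPareto : ∀ s, (∑ i, U s i) ≤ (N : ℝ) * vC (N - 1))
    (u : Fin N → ℝ)
    (hu : u ∈ convexHull ℝ {x | ∃ s, x = U s})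
    (hμ2 : u ⟨0, by omega⟩ -
      (1 / ((N : ℝ) - 1)) * ∑ j ∈ univ.filter (fun j => j ≠ (⟨0, by omega⟩ : Fin N)), u j ≤ 0) :
    u ⟨0, by omega⟩ ≤ vC (N - 1) := by
  have htotal : ∑ i, u i ≤ N * vC (N - 1) :=
    sum_le_of_mem_convexHull (by rintro x ⟨s, rfl⟩; exact hPareto s) hu
  have hfirst : N * u ⟨0, by omega⟩ ≤ ∑ i, u i := by
    simpa using card_mul_le_sum_of_le_mean_others u ⟨0, by omega⟩
      (by rw [Fintype.card_fin]; omega) (by simpa using hμ2)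
  exact le_of_mul_le_mul_left (hfirst.trans htotal) (by positivity)
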